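/- Fix integers s, u ≥ 1. Let F₂ be the free group on two generators a, b, and let F₂⁺ be the submonoid of F₂ generated by a and b. Let A = ⟨a^s⟩ and B' = ⟨a^u⟩ be the cyclic subgroups generated by a^s and a^u, and let φ : A → B' be the isomorphism with φ(a^{ms}) = a^{mu} for m ∈ ℤ. Let F₂* be the HNN extension of F₂ with respect to A, B', φ (so F₂* = ⟨a, b, t ∣ a^s t = t a^u⟩), and let F₂⁺* be the submonoid of F₂* generated by of(F₂⁺) and t. Then (F₂*, F₂⁺*) is quasi-lattice ordered: F₂⁺* ∩ (F₂⁺*)⁻¹ = {e}, and every pair of elements of F₂* with a common upper bound in F₂⁺* (for the order u ≤ v iff u⁻¹v ∈ F₂⁺*) has a least common upper bound in F₂⁺*. -/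

import Mathlib

/-!
Every element of `P*` is a word `x₀ t x₁ t ⋯ xₖ t g` in positive elements of `F₂`, and the relation
`a ^ (u k) t = t a ^ (s k)` lets one slide powers of `a` to the right until no syllable `xᵢ` ends
in `a ^ u`. A fraction `X Y⁻¹` of two such words is brought to a canonical form `c d⁻¹` by
cancelling common right factors (a common last letter, or a whole `t`-syllable when the tails
differ by a power of `a ^ s`), so that `c ≤ X`; Britton's lemma shows that `c` depends only on
`X Y⁻¹`. Hence if `g` has an upper bound in `P*`, every upper bound `z` of `1` and `g` lies above
the canonical numerator `c` of `g = z (g⁻¹ z)⁻¹`, so `c = 1 ∨ g`; and `x ∨ y = 1 ∨ x (1 ∨ x⁻¹ y)`.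
Finally `P* ∩ P*⁻¹ = 1` since the `t`-degree is nonnegative on `P*` and vanishes only on `F₂⁺`.
-/

/-- The left-invariant relation `x ≤ y ↔ x⁻¹ * y ∈ P` associated to a submonoid `P`. -/
def QLO.le {G : Type*} [Group G] (P : Submonoid G) (x y : G) : Prop := x⁻¹ * y ∈ P

/-- `w` is the least common upper bound of `x` and `y` lying in `P`. -/
def QLO.IsLub {G : Type*} [Group G] (P : Submonoid G) (x y w : G) : Prop :=
  w ∈ P ∧ QLO.le P x w ∧ QLO.le P y w ∧
    ∀ z ∈ P, QLO.le P x z → QLO.le P y z → QLO.le P w z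

/-- `(G, P)` is a quasi-lattice ordered group. -/
def QLO.IsQLO {G : Type*} [Group G] (P : Submonoid G) : Prop :=
  (∀ x : G, x ∈ P → x⁻¹ ∈ P → x = 1) ∧
    ∀ x y : G, (∃ z ∈ P, QLO.le P x z ∧ QLO.le P y z) → ∃ w : G, QLO.IsLub P x y w

/-- The free group on two generators `a = of true` and `b = of false`. -/
abbrev F₂ : Type := FreeGroup Bool

/-- The submonoid of `F₂` generated by the two generators. -/
def F₂pos : Submonoid F₂ := Submonoid.closure {FreeGroup.of true, FreeGroup.of false}

namespace FreeGroup

variable {α : Type*}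

def posWord (l : List α) : FreeGroup α := mk (l.map (·, true))

@[simp]
theorem posWord_nil : posWord ([] : List α) = 1 := rfl

@[simp]
theorem posWord_append (l₁ l₂ : List α) : posWord (l₁ ++ l₂) = posWord l₁ * posWord l₂ := by
  simp [posWord, mul_mk]

@[simp]
theorem posWord_cons (x : α) (l : List α) : posWord (x :: l) = of x * posWord l := by
  simp [posWord, of, mul_mk]

theorem of_pow_eq_posWord (x : α) (n : ℕ) : of x ^ n = posWord (List.replicate n x) := by
  induction n with
  | zero => rfl
  | succ n ih => rw [pow_succ', ih, List.replicate_succ, posWord_cons]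

theorem isReduced_map_const (l : List α) (b : Bool) : IsReduced (l.map (·, b)) :=
  (List.isChain_map _).2 (List.Pairwise.isChain (List.pairwise_of_forall (by simp)))

variable [DecidableEq α]

theorem toWord_posWord (l : List α) : (posWord l).toWord = l.map (·, true) :=
  (isReduced_map_const l true).reduce_eq

theorem posWord_injective : Function.Injective (posWord : List α → FreeGroup α) := by
  intro l₁ l₂ h
  have := congrArg toWord h
  rw [toWord_posWord, toWord_posWord] at this
  exact List.map_injective_iff.2 (fun a b h => congrArg Prod.fst h) this

theorem posWord_eq_one_iff {l : List α} : posWord l = 1 ↔ l = [] :=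
  posWord_injective.eq_iff' rfl

theorem toWord_posWord_mul_inv {X Y : List α}
    (hXY : ∀ x ∈ X.getLast?, x ∉ Y.getLast?) :
    (posWord X * (posWord Y)⁻¹).toWord = X.map (·, true) ++ Y.reverse.map (·, false) := by
  have hinv : invRev (Y.map (·, true)) = Y.reverse.map (·, false) := by
    simp [invRev, List.map_reverse]
  rw [posWord, posWord, inv_mk, mul_mk, toWord_mk, hinv]
  refine IsReduced.reduce_eq (List.isChain_append.2
    ⟨isReduced_map_const X true, isReduced_map_const _ false, ?_⟩)
  intro a ha b hb hab
  simp only [List.getLast?_map, Option.mem_def, Option.map_eq_some_iff] at ha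
  simp only [List.head?_map, List.head?_reverse, Option.mem_def, Option.map_eq_some_iff] at hb
  obtain ⟨x, hx, rfl⟩ := ha
  obtain ⟨y, hy, rfl⟩ := hb
  dsimp only at hab
  subst hab
  exact absurd hy (hXY x hx)

theorem posWord_mul_inv_injective {X Y X' Y' : List α}
    (h : ∀ x ∈ X.getLast?, x ∉ Y.getLast?)
    (h' : ∀ x ∈ X'.getLast?, x ∉ Y'.getLast?)
    (heq : posWord X * (posWord Y)⁻¹ = posWord X' * (posWord Y')⁻¹) : X = X' ∧ Y = Y' := by
  have hw := congrArg toWord heq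
  rw [toWord_posWord_mul_inv h, toWord_posWord_mul_inv h'] at hw
  exact ⟨by simpa using congrArg (List.filterMap fun p => if p.2 then some p.1 else none) hw,
    by simpa using congrArg (List.filterMap fun p => if p.2 then none else some p.1) hw⟩

theorem eq_of_posWord_eq_mul_pow {x : α} {u n : ℕ} {w w' : List α}
    (hw' : ¬ List.replicate u x <:+ w') (h : posWord w' = posWord w * (of x ^ u) ^ n) :
    w' = w := by
  rw [← pow_mul, of_pow_eq_posWord, ← posWord_append] at h
  obtain rfl := posWord_injective h
  cases n with
  | zero => simp
  | succ n =>
    refine absurd ?_ hw'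
    rw [Nat.mul_succ, ← List.replicate_append_replicate]
    exact (List.suffix_append _ _).trans (List.suffix_append _ _)

theorem eq_of_posWord_eq_mul_zpow {x : α} {u : ℕ} {w w' : List α}
    (hw : ¬ List.replicate u x <:+ w) (hw' : ¬ List.replicate u x <:+ w') {j : ℤ}
    (h : posWord w' = posWord w * (of x ^ u) ^ j) : w = w' := by
  cases j with
  | ofNat n => exact (eq_of_posWord_eq_mul_pow hw' h).symm
  | negSucc n =>
    refine eq_of_posWord_eq_mul_pow hw (n := n + 1) ?_
    rw [h, mul_assoc, zpow_negSucc, inv_mul_cancel, mul_one]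

end FreeGroup

theorem List.exists_eq_append_replicate {α : Type*} {u : ℕ} (hu : 0 < u) (x : α)
    (w : List α) :
    ∃ w' k, w = w' ++ List.replicate (u * k) x ∧ ¬ List.replicate u x <:+ w' := by
  by_cases h : List.replicate u x <:+ w
  · obtain ⟨v, rfl⟩ := h
    have : v.length < (v ++ List.replicate u x).length := by simpa
    obtain ⟨w', k, rfl, hw'⟩ := exists_eq_append_replicate hu x v
    refine ⟨w', k + 1, ?_, hw'⟩
    rw [Nat.mul_succ, ← List.replicate_append_replicate, List.append_assoc]
  · exact ⟨w, 0, by simp, h⟩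
termination_by w.length

theorem QLO.isQLO_of_exists_isLub_one {G : Type*} [Group G] {P : Submonoid G}
    (hP : ∀ x : G, x ∈ P → x⁻¹ ∈ P → x = 1)
    (hlub : ∀ g : G, (∃ z ∈ P, QLO.le P g z) → ∃ w, QLO.IsLub P 1 g w) : QLO.IsQLO P := by
  refine ⟨hP, fun x y ⟨z, hz, hxz, hyz⟩ => ?_⟩
  unfold QLO.le at hxz hyz
  have hxy : ∀ z : G, (x⁻¹ * y)⁻¹ * (x⁻¹ * z) = y⁻¹ * z := fun z => by group
  obtain ⟨w₁, hw₁P, -, hw₁, hw₁_min⟩ := hlub (x⁻¹ * y) ⟨x⁻¹ * z, hxz, by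
    unfold QLO.le; rwa [hxy]⟩
  unfold QLO.le at hw₁ hw₁_min
  -- `x * w₁` is the least upper bound of `x` and `y` in `G`; the second call pushes it into `P`.
  have hxw₁ : ∀ z ∈ P, x⁻¹ * z ∈ P → y⁻¹ * z ∈ P → (x * w₁)⁻¹ * z ∈ P := by
    intro z hz hxz hyz
    have := hw₁_min (x⁻¹ * z) hxz (by simpa using hxz) (by rwa [hxy])
    rwa [mul_inv_rev, mul_assoc]
  obtain ⟨w, hwP, -, hw, hw_min⟩ := hlub (x * w₁) ⟨z, hz, hxw₁ z hz hxz hyz⟩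
  unfold QLO.le at hw hw_min
  refine ⟨w, hwP, ?_, ?_, fun z hz hxz hyz => hw_min z hz (by simpa using hz) (hxw₁ z hz hxz hyz)⟩
  · show x⁻¹ * w ∈ P
    rw [show x⁻¹ * w = w₁ * ((x * w₁)⁻¹ * w) by group]
    exact mul_mem hw₁P hw
  · show y⁻¹ * w ∈ P
    rw [show y⁻¹ * w = (x⁻¹ * y)⁻¹ * w₁ * ((x * w₁)⁻¹ * w) by group]
    exact mul_mem hw₁ hw

namespace HNNExtension

variable {G : Type*} [Group G] {A B : Subgroup G} (φ : A ≃* B)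

def posCone (P : Submonoid G) : Submonoid (HNNExtension G A B φ) :=
  Submonoid.closure (of '' (P : Set G) ∪ {t})

def tDegree : HNNExtension G A B φ →* Multiplicative ℤ :=
  lift 1 (Multiplicative.ofAdd 1) (by simp)

theorem tDegree_nonneg_and_mem_map_of_mem_posCone {P : Submonoid G} {x : HNNExtension G A B φ}
    (hx : x ∈ posCone φ P) :
    0 ≤ (tDegree φ x).toAdd ∧ ((tDegree φ x).toAdd = 0 → x ∈ P.map of) := by
  induction hx using Submonoid.closure_induction with
  | mem y hy =>
    rcases hy with ⟨p, hp, rfl⟩ | rfl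
    · simpa [tDegree] using Submonoid.mem_map_of_mem of hp
    · simp [tDegree]
  | one => simp [one_mem]
  | mul y z _ _ hy hz =>
    simp only [map_mul, toAdd_mul]
    have := hy.1
    have := hz.1
    exact ⟨by omega, fun h => mul_mem (hy.2 (by omega)) (hz.2 (by omega))⟩

theorem eq_one_of_mem_posCone {P : Submonoid G} (hP : ∀ x : G, x ∈ P → x⁻¹ ∈ P → x = 1)
    (x : HNNExtension G A B φ) (hx : x ∈ posCone φ P) (hx' : x⁻¹ ∈ posCone φ P) : x = 1 := by
  have h := tDegree_nonneg_and_mem_map_of_mem_posCone φ hx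
  have h' := tDegree_nonneg_and_mem_map_of_mem_posCone φ hx'
  have hdeg : (tDegree φ x).toAdd + (tDegree φ x⁻¹).toAdd = 0 := by
    rw [← toAdd_mul, ← map_mul, mul_inv_cancel, map_one, toAdd_one]
  obtain ⟨p, hp, rfl⟩ := h.2 (by linarith [h.1, h'.1])
  obtain ⟨q, hq, hpq⟩ := h'.2 (by linarith [h.1, h'.1])
  rw [← map_inv, (of_injective (φ := φ)).eq_iff] at hpq
  rw [hP p hp (hpq ▸ hq), map_one]

def tWord (gs : List G) (g : G) : HNNExtension G A B φ := (gs.map fun x => of x * t).prod * of g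

@[simp]
theorem tWord_nil (g : G) : tWord φ [] g = of g := by simp [tWord]

theorem tWord_cons (x : G) (gs : List G) (g : G) :
    tWord φ (x :: gs) g = of x * (t * tWord φ gs g) := by
  simp [tWord, mul_assoc]

theorem tWord_mul_of (gs : List G) (g h : G) : tWord φ gs g * of h = tWord φ gs (g * h) := by
  simp [tWord, mul_assoc]

theorem tWord_append_singleton (gs : List G) (x g : G) :
    tWord φ (gs ++ [x]) g = tWord φ gs x * (t * of g) := by
  simp [tWord, mul_assoc]

theorem tWord_mul_tWord_cons (gs hs : List G) (g x h : G) :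
    tWord φ gs g * tWord φ (x :: hs) h = tWord φ (gs ++ (g * x) :: hs) h := by
  simp [tWord, mul_assoc]

theorem t_mul_tWord (gs : List G) (g : G) :
    t * tWord φ gs g = ((gs ++ [g]).map fun x => t * of x).prod := by
  induction gs with
  | nil => simp
  | cons x gs ih => simp [tWord_cons, ih, mul_assoc]

theorem tWord_inv (gs : List G) (g : G) :
    (tWord φ gs g)⁻¹ = of g⁻¹ * (gs.reverse.map fun x => t⁻¹ * of x⁻¹).prod := by
  induction gs generalizing g with
  | nil => simp
  | cons x gs ih => simp [tWord_cons, ih, mul_assoc]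

/-- The reduced word spelling `tWord φ cs c * (tWord φ ds d)⁻¹`; `h` excludes the only possible
pinch `t (c d⁻¹) t⁻¹`. -/
def fractionWord (cs ds : List G) (c d : G) (h : cs ≠ [] → ds ≠ [] → c * d⁻¹ ∉ A) :
    NormalWord.ReducedWord G A B where
  head := (cs ++ [c * d⁻¹]).head (by simp)
  toList := (cs ++ [c * d⁻¹]).tail.map ((1 : ℤˣ), ·) ++ ds.reverse.map fun y => (-1, y⁻¹)
  chain := by
    refine List.isChain_append.2 ⟨?_, ?_, ?_⟩
    · exact (List.isChain_map _).2 (List.Pairwise.isChain (List.pairwise_of_forall (by simp)))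
    · exact (List.isChain_map _).2 (List.Pairwise.isChain (List.pairwise_of_forall (by simp)))
    · intro x hx y hy hxA
      cases cs with
      | nil => simp at hx
      | cons c₀ cs =>
        have hd : ds ≠ [] := by rintro rfl; simp at hy
        simp only [List.cons_append, List.tail_cons, List.getLast?_map, List.getLast?_concat,
          Option.map_some, Option.mem_def, Option.some.injEq] at hx
        subst hx
        exact absurd hxA (h (List.cons_ne_nil _ _) hd)

theorem prod_fractionWord (cs ds : List G) (c d : G) (h : cs ≠ [] → ds ≠ [] → c * d⁻¹ ∉ A) :
    (fractionWord cs ds c d h).prod φ = tWord φ cs c * (tWord φ ds d)⁻¹ := by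
  rw [tWord_inv, ← mul_assoc, tWord_mul_of]
  cases cs with
  | nil => simp [fractionWord, NormalWord.ReducedWord.prod, Function.comp_def]
  | cons c₀ cs =>
    simp [fractionWord, NormalWord.ReducedWord.prod, Function.comp_def, tWord_cons, t_mul_tWord,
      mul_assoc]

theorem map_fst_fractionWord (cs ds : List G) (c d : G) (h : cs ≠ [] → ds ≠ [] → c * d⁻¹ ∉ A) :
    (fractionWord (B := B) cs ds c d h).toList.map Prod.fst =
      List.replicate cs.length 1 ++ List.replicate ds.length (-1) := by
  cases cs <;> simp [fractionWord, Function.comp_def, List.map_const', List.replicate_succ']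

/-- Britton's lemma for fractions of `t`-words. -/
theorem length_eq_and_inv_mul_mem_of_tWord_mul_inv_eq {cs ds cs' ds' : List G} {c d c' d' : G}
    (h : cs ≠ [] → ds ≠ [] → c * d⁻¹ ∉ A) (h' : cs' ≠ [] → ds' ≠ [] → c' * d'⁻¹ ∉ A)
    (heq : tWord φ cs c * (tWord φ ds d)⁻¹ = tWord φ cs' c' * (tWord φ ds' d')⁻¹) :
    cs.length = cs'.length ∧ ∀ x ∈ cs.head?, ∀ x' ∈ cs'.head?, x⁻¹ * x' ∈ B := by
  rw [← prod_fractionWord φ _ _ _ _ h, ← prod_fractionWord φ _ _ _ _ h'] at heq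
  obtain ⟨hfst, hhead⟩ := ReducedWord.map_fst_eq_and_of_prod_eq φ heq
  rw [map_fst_fractionWord, map_fst_fractionWord] at hfst
  have hlen : cs.length = cs'.length := by
    simpa [List.count_replicate] using congrArg (List.count 1) hfst
  refine ⟨hlen, fun x hx x' hx' => ?_⟩
  obtain ⟨xs, rfl⟩ := List.head?_eq_some_iff.1 hx
  obtain ⟨xs', rfl⟩ := List.head?_eq_some_iff.1 hx'
  simpa [fractionWord] using hhead 1 (by cases xs <;> simp [fractionWord])

end HNNExtension

namespace F₂

open HNNExtension
open FreeGroup hiding of map_one map_mul map_inv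

theorem mem_F₂pos_iff {x : F₂} : x ∈ F₂pos ↔ ∃ l, posWord l = x := by
  refine ⟨fun hx => ?_, ?_⟩
  · induction hx using Submonoid.closure_induction with
    | mem y hy =>
      rcases hy with rfl | rfl
      exacts [⟨[true], rfl⟩, ⟨[false], rfl⟩]
    | one => exact ⟨[], rfl⟩
    | mul y z _ _ hy hz =>
      obtain ⟨l₁, rfl⟩ := hy
      obtain ⟨l₂, rfl⟩ := hz
      exact ⟨l₁ ++ l₂, posWord_append _ _⟩
  · rintro ⟨l, rfl⟩
    induction l with
    | nil => exact one_mem _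
    | cons b l ih =>
      rw [posWord_cons]
      exact mul_mem (Submonoid.subset_closure (by cases b <;> simp)) ih

theorem eq_one_of_mem_F₂pos (x : F₂) (hx : x ∈ F₂pos) (hx' : x⁻¹ ∈ F₂pos) : x = 1 := by
  obtain ⟨l, rfl⟩ := mem_F₂pos_iff.1 hx
  obtain ⟨l', hl'⟩ := mem_F₂pos_iff.1 hx'
  have : posWord (l ++ l') = 1 := by rw [posWord_append, hl', mul_inv_cancel]
  rw [(List.append_eq_nil_iff.1 (posWord_eq_one_iff.1 this)).1, posWord_nil]

variable {s u : ℕ} {A B' : Subgroup F₂} (φ : A ≃* B')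

def posTWord (ws : List (List Bool)) (C : List Bool) : HNNExtension F₂ A B' φ :=
  tWord φ (ws.map posWord) (posWord C)

theorem posTWord_mem_posCone (ws : List (List Bool)) (C : List Bool) :
    posTWord φ ws C ∈ posCone φ F₂pos := by
  have hof : ∀ w, (of (posWord w) : HNNExtension F₂ A B' φ) ∈ posCone φ F₂pos := fun w =>
    Submonoid.subset_closure (Or.inl ⟨_, mem_F₂pos_iff.2 ⟨w, rfl⟩, rfl⟩)
  induction ws with
  | nil => simpa [posTWord] using hof C
  | cons w ws ih =>
    rw [posTWord, List.map_cons, tWord_cons]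
    exact mul_mem (hof w) (mul_mem (Submonoid.subset_closure (Or.inr rfl)) ih)

theorem mem_posCone_iff {z : HNNExtension F₂ A B' φ} :
    z ∈ posCone φ F₂pos ↔ ∃ ws C, posTWord φ ws C = z := by
  refine ⟨fun hz => ?_, fun ⟨ws, C, hz⟩ => hz ▸ posTWord_mem_posCone φ ws C⟩
  induction hz using Submonoid.closure_induction with
  | mem y hy =>
    rcases hy with ⟨x, hx, rfl⟩ | rfl
    · obtain ⟨l, rfl⟩ := mem_F₂pos_iff.1 hx
      exact ⟨[], l, by simp [posTWord]⟩
    · exact ⟨[[]], [], by simp [posTWord, tWord_cons]⟩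
  | one => exact ⟨[], [], by simp [posTWord]⟩
  | mul y z _ _ hy hz =>
    obtain ⟨ws, C, rfl⟩ := hy
    obtain ⟨ws', C', rfl⟩ := hz
    cases ws' with
    | nil => exact ⟨ws, C ++ C', by simp [posTWord, tWord_mul_of]⟩
    | cons w ws' => exact ⟨ws ++ (C ++ w) :: ws', C', by simp [posTWord, tWord_mul_tWord_cons]⟩

theorem posTWord_append (ws : List (List Bool)) (C C' : List Bool) :
    posTWord φ ws (C ++ C') = posTWord φ ws C * posTWord φ [] C' := by
  simp [posTWord, tWord_mul_of]

def Normalized (u : ℕ) (ws : List (List Bool)) : Prop := ∀ w ∈ ws, ¬ List.replicate u true <:+ w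

theorem Normalized.tail {u : ℕ} {w : List Bool} {ws : List (List Bool)}
    (h : Normalized u (w :: ws)) : Normalized u ws :=
  fun v hv => h v (List.mem_cons_of_mem w hv)

/-- No cancellation is possible in `posTWord φ cws C * (posTWord φ dws D)⁻¹`: no syllable can be
slid through `t`, `C` and `D` end in different letters, and `t (C D⁻¹) t⁻¹` is not a pinch. -/
structure IsCanonical (u : ℕ) (A : Subgroup F₂) (cws dws : List (List Bool)) (C D : List Bool) :
    Prop where
  normalized_left : Normalized u cws
  normalized_right : Normalized u dws
  getLast_ne : ∀ x ∈ C.getLast?, x ∉ D.getLast?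
  not_mem : cws ≠ [] → dws ≠ [] → posWord C * (posWord D)⁻¹ ∉ A

theorem Normalized.eq_of_tWord_mul_inv_eq (hB : B' = Subgroup.zpowers (FreeGroup.of true ^ u))
    {cs cs' : List (List Bool)} (hcs : Normalized u cs) (hcs' : Normalized u cs')
    {ds ds' : List F₂} {g d g' d' : F₂}
    (h : cs ≠ [] → ds ≠ [] → g * d⁻¹ ∉ A) (h' : cs' ≠ [] → ds' ≠ [] → g' * d'⁻¹ ∉ A)
    (heq : tWord φ (cs.map posWord) g * (tWord φ ds d)⁻¹ =
      tWord φ (cs'.map posWord) g' * (tWord φ ds' d')⁻¹) :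
    cs = cs' ∧ of g * (tWord φ ds d)⁻¹ = of g' * (tWord φ ds' d')⁻¹ := by
  induction cs generalizing cs' with
  | nil =>
    have hlen :=
      (length_eq_and_inv_mul_mem_of_tWord_mul_inv_eq φ (by simp) (by simpa using h') heq).1
    obtain rfl : cs' = [] := List.eq_nil_of_length_eq_zero (by simpa using hlen.symm)
    simpa using heq
  | cons w cs ih =>
    obtain ⟨hlen, hhead⟩ :=
      length_eq_and_inv_mul_mem_of_tWord_mul_inv_eq φ (by simpa using h) (by simpa using h') heq
    cases cs' with
    | nil => simp at hlen
    | cons w' cs' =>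
      have hB' := hhead _ rfl _ rfl
      rw [hB] at hB'
      obtain ⟨j, hj⟩ := Subgroup.mem_zpowers_iff.1 hB'
      obtain rfl : w = w' := eq_of_posWord_eq_mul_zpow (hcs w (by simp)) (hcs' w' (by simp))
        (by rw [hj, mul_inv_cancel_left])
      simp only [List.map_cons, tWord_cons, mul_assoc] at heq
      obtain ⟨rfl, h2⟩ := ih hcs.tail hcs'.tail (fun _ hd => h (List.cons_ne_nil _ _) hd)
        (fun _ hd => h' (List.cons_ne_nil _ _) hd) (mul_left_cancel (mul_left_cancel heq))
      exact ⟨rfl, h2⟩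

theorem IsCanonical.posTWord_eq (hB : B' = Subgroup.zpowers (FreeGroup.of true ^ u))
    {cws dws cws' dws' : List (List Bool)} {C D C' D' : List Bool}
    (hc : IsCanonical u A cws dws C D) (hc' : IsCanonical u A cws' dws' C' D')
    (heq : posTWord φ cws C * (posTWord φ dws D)⁻¹ =
      posTWord φ cws' C' * (posTWord φ dws' D')⁻¹) :
    posTWord φ cws C = posTWord φ cws' C' := by
  obtain ⟨rfl, h₁⟩ := hc.normalized_left.eq_of_tWord_mul_inv_eq φ hB hc'.normalized_left
    (by simpa using hc.not_mem) (by simpa using hc'.not_mem) heq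
  have h₂ : tWord φ (dws.map posWord) (posWord D * (posWord C)⁻¹) * (tWord φ [] 1)⁻¹ =
      tWord φ (dws'.map posWord) (posWord D' * (posWord C')⁻¹) * (tWord φ [] 1)⁻¹ := by
    simpa [← tWord_mul_of] using congrArg (·⁻¹) h₁
  obtain ⟨rfl, h₃⟩ := hc.normalized_right.eq_of_tWord_mul_inv_eq φ hB hc'.normalized_right
    (by simp) (by simp) h₂
  obtain ⟨-, rfl⟩ := posWord_mul_inv_injective (fun y hy hx => hc.getLast_ne y hx hy)
    (fun y hy hx => hc'.getLast_ne y hx hy) (of_injective (φ := φ) (by simpa using h₃))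
  rfl

section Existence

variable (hA : A = Subgroup.zpowers (FreeGroup.of true ^ s))
  (hφ : ∀ (x : A) (m : ℤ), (x : F₂) = (FreeGroup.of true ^ s) ^ m →
    ((φ x : B') : F₂) = (FreeGroup.of true ^ u) ^ m)
include hA hφ

theorem t_mul_of_posWord_replicate (k : ℕ) :
    (t : HNNExtension F₂ A B' φ) * of (posWord (List.replicate (s * k) true)) =
      of (posWord (List.replicate (u * k) true)) * t := by
  have hmem : (FreeGroup.of true ^ s) ^ (k : ℤ) ∈ A := hA ▸ zpow_mem (Subgroup.mem_zpowers _) k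
  have := t_mul_of (φ := φ) ⟨_, hmem⟩
  rw [hφ ⟨_, hmem⟩ k rfl] at this
  change t * of ((FreeGroup.of true ^ s) ^ (k : ℤ)) = _ at this
  rwa [zpow_natCast, zpow_natCast, ← pow_mul, ← pow_mul, of_pow_eq_posWord,
    of_pow_eq_posWord] at this

theorem exists_normalized (hu : 0 < u) (ws : List (List Bool)) (p C : List Bool) :
    ∃ ws' C', Normalized u ws' ∧ of (posWord p) * posTWord φ ws C = posTWord φ ws' C' := by
  induction ws generalizing p with
  | nil => exact ⟨[], p ++ C, by simp [Normalized], by simp [posTWord]⟩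
  | cons w ws ih =>
    obtain ⟨w', k, hw, hw'⟩ := List.exists_eq_append_replicate hu true (p ++ w)
    obtain ⟨ws', C', hN, heq⟩ := ih (List.replicate (s * k) true)
    refine ⟨w' :: ws', C', List.forall_mem_cons.2 ⟨hw', hN⟩, ?_⟩
    have hsplit : (of (posWord p) * of (posWord w) : HNNExtension F₂ A B' φ) =
        of (posWord w') * of (posWord (List.replicate (u * k) true)) := by
      rw [← map_mul, ← map_mul, ← posWord_append, ← posWord_append, hw]
    calc of (posWord p) * posTWord φ (w :: ws) C
        = of (posWord w') * (of (posWord (List.replicate (u * k) true)) * t) *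
            posTWord φ ws C := by
          simp only [posTWord, List.map_cons, tWord_cons, ← mul_assoc, hsplit]
      _ = posTWord φ (w' :: ws') C' := by
          rw [← t_mul_of_posWord_replicate φ hA hφ, mul_assoc, mul_assoc, heq]
          simp only [posTWord, List.map_cons, tWord_cons]

theorem posTWord_append_singleton_replicate (ws : List (List Bool)) (w D : List Bool) (n : ℕ) :
    posTWord φ (ws ++ [w]) (List.replicate (s * n) true ++ D) =
      posTWord φ ws (w ++ List.replicate (u * n) true) * posTWord φ [[]] D := by
  rw [posTWord, List.map_append, List.map_singleton, tWord_append_singleton, posWord_append,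
    map_mul, ← mul_assoc t, t_mul_of_posWord_replicate φ hA hφ]
  simp [posTWord, tWord_cons, ← tWord_mul_of, mul_assoc]

theorem exists_common_right_factor {cws dws : List (List Bool)} {C D : List Bool}
    (hcws : Normalized u cws) (hdws : Normalized u dws) (hc : cws ≠ []) (hd : dws ≠ [])
    (hCD : posWord C * (posWord D)⁻¹ ∈ A) :
    ∃ cws₀ dws₀ C₀ D₀ E, cws₀.length < cws.length ∧ Normalized u cws₀ ∧ Normalized u dws₀ ∧
      posTWord φ cws C = posTWord φ cws₀ C₀ * posTWord φ [[]] E ∧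
      posTWord φ dws D = posTWord φ dws₀ D₀ * posTWord φ [[]] E := by
  obtain ⟨cws₀, x, rfl⟩ := (List.eq_nil_or_concat' cws).resolve_left hc
  obtain ⟨dws₀, y, rfl⟩ := (List.eq_nil_or_concat' dws).resolve_left hd
  have hcws₀ : Normalized u cws₀ := fun w hw => hcws w (List.mem_append_left _ hw)
  have hdws₀ : Normalized u dws₀ := fun w hw => hdws w (List.mem_append_left _ hw)
  have hpeel := posTWord_append_singleton_replicate φ hA hφ
  rw [hA] at hCD
  obtain ⟨k, hk⟩ := Subgroup.mem_zpowers_iff.1 hCD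
  cases k with
  | ofNat n =>
    obtain rfl : C = List.replicate (s * n) true ++ D := posWord_injective (by
      rw [posWord_append, ← of_pow_eq_posWord, pow_mul, ← zpow_natCast]
      exact mul_inv_eq_iff_eq_mul.1 hk.symm)
    exact ⟨cws₀, dws₀, _, y, D, by simp, hcws₀, hdws₀, hpeel cws₀ x D n,
      by simpa using hpeel dws₀ y D 0⟩
  | negSucc n =>
    obtain rfl : D = List.replicate (s * (n + 1)) true ++ C := posWord_injective (by
      rw [posWord_append, ← of_pow_eq_posWord, pow_mul, mul_inv_eq_iff_eq_mul.1 hk.symm,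
        zpow_negSucc, mul_inv_cancel_left])
    exact ⟨cws₀, dws₀, x, _, C, by simp, hcws₀, hdws₀, by simpa using hpeel cws₀ x C 0,
      hpeel dws₀ y C (n + 1)⟩

theorem exists_isCanonical (hu : 0 < u) {cws dws : List (List Bool)} (hcws : Normalized u cws)
    (hdws : Normalized u dws) (C D : List Bool) :
    ∃ cws' dws' C' D', IsCanonical u A cws' dws' C' D' ∧
      posTWord φ cws' C' * (posTWord φ dws' D')⁻¹ = posTWord φ cws C * (posTWord φ dws D)⁻¹ ∧
      (posTWord φ cws' C')⁻¹ * posTWord φ cws C ∈ posCone φ F₂pos := by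
  by_cases hlast : ∃ ℓ ∈ C.getLast?, ℓ ∈ D.getLast?
  · obtain ⟨ℓ, hC, hD⟩ := hlast
    obtain ⟨C₀, rfl⟩ := List.getLast?_eq_some_iff.1 hC
    obtain ⟨D₀, rfl⟩ := List.getLast?_eq_some_iff.1 hD
    obtain ⟨cws', dws', C', D', hcan, heq, hle⟩ := exists_isCanonical hu hcws hdws C₀ D₀
    refine ⟨cws', dws', C', D', hcan, ?_, ?_⟩
    · rw [heq, posTWord_append, posTWord_append]
      group
    · rw [posTWord_append, ← mul_assoc]
      exact mul_mem hle (posTWord_mem_posCone φ [] [ℓ])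
  push Not at hlast
  by_cases hpinch : cws ≠ [] ∧ dws ≠ [] ∧ posWord C * (posWord D)⁻¹ ∈ A
  · obtain ⟨cws₀, dws₀, C₀, D₀, E, hlen, hcws₀, hdws₀, hc, hd⟩ :=
      exists_common_right_factor φ hA hφ hcws hdws hpinch.1 hpinch.2.1 hpinch.2.2
    obtain ⟨cws', dws', C', D', hcan, heq, hle⟩ := exists_isCanonical hu hcws₀ hdws₀ C₀ D₀
    refine ⟨cws', dws', C', D', hcan, ?_, ?_⟩
    · rw [heq, hc, hd]
      group
    · rw [hc, ← mul_assoc]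
      exact mul_mem hle (posTWord_mem_posCone φ [[]] E)
  · exact ⟨cws, dws, C, D, ⟨hcws, hdws, hlast, fun hc hd hCD => hpinch ⟨hc, hd, hCD⟩⟩, rfl,
      by simp [one_mem]⟩
termination_by (cws.length, C.length + D.length)

theorem exists_isCanonical_of_mem_posCone (hu : 0 < u) {X Y : HNNExtension F₂ A B' φ}
    (hX : X ∈ posCone φ F₂pos) (hY : Y ∈ posCone φ F₂pos) :
    ∃ cws dws C D, IsCanonical u A cws dws C D ∧
      posTWord φ cws C * (posTWord φ dws D)⁻¹ = X * Y⁻¹ ∧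
      (posTWord φ cws C)⁻¹ * X ∈ posCone φ F₂pos := by
  obtain ⟨xs, C, rfl⟩ := (mem_posCone_iff φ).1 hX
  obtain ⟨ys, D, rfl⟩ := (mem_posCone_iff φ).1 hY
  obtain ⟨xs', C', hxs', hx⟩ := exists_normalized φ hA hφ hu xs [] C
  obtain ⟨ys', D', hys', hy⟩ := exists_normalized φ hA hφ hu ys [] D
  simp only [posWord_nil, map_one, one_mul] at hx hy
  rw [hx, hy]
  exact exists_isCanonical φ hA hφ hu hxs' hys' C' D'

end Existence

theorem exists_isLub_one (hA : A = Subgroup.zpowers (FreeGroup.of true ^ s))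
    (hB : B' = Subgroup.zpowers (FreeGroup.of true ^ u))
    (hφ : ∀ (x : A) (m : ℤ), (x : F₂) = (FreeGroup.of true ^ s) ^ m →
      ((φ x : B') : F₂) = (FreeGroup.of true ^ u) ^ m)
    (hu : 0 < u) (g : HNNExtension F₂ A B' φ)
    (hg : ∃ z ∈ posCone φ F₂pos, QLO.le (posCone φ F₂pos) g z) :
    ∃ w, QLO.IsLub (posCone φ F₂pos) 1 g w := by
  obtain ⟨z₀, hz₀, hgz₀⟩ := hg
  obtain ⟨cws, dws, C, D, hcan, hfrac, -⟩ :=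
    exists_isCanonical_of_mem_posCone φ hA hφ hu hz₀ hgz₀
  rw [mul_inv_rev, inv_inv, mul_inv_cancel_left] at hfrac
  refine ⟨posTWord φ cws C, posTWord_mem_posCone φ cws C, ?_, ?_, ?_⟩
  · simpa [QLO.le] using posTWord_mem_posCone φ cws C
  · show g⁻¹ * posTWord φ cws C ∈ _
    rw [← hfrac, mul_inv_rev, inv_inv, inv_mul_cancel_right]
    exact posTWord_mem_posCone φ dws D
  · intro z hz _ hgz
    obtain ⟨cws', dws', C', D', hcan', hfrac', hle⟩ :=
      exists_isCanonical_of_mem_posCone φ hA hφ hu hz hgz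
    rw [mul_inv_rev, inv_inv, mul_inv_cancel_left, ← hfrac] at hfrac'
    rwa [hcan'.posTWord_eq φ hB hcan hfrac'] at hle

end F₂

theorem stmt15_general (s u : ℕ) (hu : 1 ≤ u)
    -- A = ⟨a^s⟩ and B' = ⟨a^u⟩
    (A B' : Subgroup F₂)
    (hA : A = Subgroup.zpowers (FreeGroup.of true ^ s))
    (hB : B' = Subgroup.zpowers (FreeGroup.of true ^ u))
    -- φ : A → B', φ(a^{ms}) = a^{mu}
    (φ : A ≃* B')
    (hφ : ∀ (x : A) (m : ℤ), (x : F₂) = (FreeGroup.of true ^ s) ^ m →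
      ((φ x : B') : F₂) = (FreeGroup.of true ^ u) ^ m) :
    QLO.IsQLO (Submonoid.closure
      ((HNNExtension.of '' (F₂pos : Set F₂)) ∪ {HNNExtension.t (φ := φ)})) :=
  QLO.isQLO_of_exists_isLub_one (HNNExtension.eq_one_of_mem_posCone φ F₂.eq_one_of_mem_F₂pos)
    (F₂.exists_isLub_one φ hA hB hφ hu)

theorem stmt15 (s u : ℕ) (hs : 1 ≤ s) (hu : 1 ≤ u)
    -- A = ⟨a^s⟩ and B' = ⟨a^u⟩
    (A B' : Subgroup F₂)
    (hA : A = Subgroup.zpowers (FreeGroup.of true ^ s))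
    (hB : B' = Subgroup.zpowers (FreeGroup.of true ^ u))
    -- φ : A → B', φ(a^{ms}) = a^{mu}
    (φ : A ≃* B')
    (hφ : ∀ (x : A) (m : ℤ), (x : F₂) = (FreeGroup.of true ^ s) ^ m →
      ((φ x : B') : F₂) = (FreeGroup.of true ^ u) ^ m) :
    QLO.IsQLO (Submonoid.closure
      ((HNNExtension.of '' (F₂pos : Set F₂)) ∪ {HNNExtension.t (φ := φ)})) :=
  stmt15_general s u hu A B' hA hB φ hφ
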